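/- Let s > 3/2 and r ≤ 1. Then there exists a constant C = C(s, r) > 0 such that for every integer k ≥ 0, ∑_{n ≥ 0} (1+n²)^{1-s} (1+(n+k)²)^{r-1} ≤ C (1+k²)^{r-1}, where the sum is over integers n ≥ 0. -/

import Mathlib

open scoped ENNReal

/-!
Since `r - 1 ≤ 0` and `k ≤ n + k`, the second factor is at most `(1 + k²)^(r-1)`, so the sum is
bounded by `(1 + k²)^(r-1) ∑ₙ (1 + n²)^(1-s)`, and this last series converges because
`(1 + n²)^(1-s) ≤ n^(2-2s)` with `2 - 2s < -1`.
-/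

lemma Real.summable_one_add_sq_rpow {a : ℝ} (ha : a < -1 / 2) :
    Summable fun n : ℕ => (1 + (n : ℝ) ^ 2) ^ a := by
  rw [← summable_nat_add_iff 1]
  have hp : Summable fun n : ℕ => ((n + 1 : ℕ) : ℝ) ^ (2 * a) :=
    (summable_nat_add_iff 1).2 (Real.summable_nat_rpow.2 (by linarith))
  refine hp.of_nonneg_of_le (fun n => by positivity) fun n => ?_
  rw [Real.rpow_mul (by positivity), Real.rpow_two]
  exact Real.rpow_le_rpow_of_nonpos (by positivity) (by linarith) (by linarith)

lemma Real.one_add_sq_rpow_le_of_nonpos {x y z : ℝ} (hx : 0 ≤ x) (hxy : x ≤ y)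
    (hz : z ≤ 0) : (1 + y ^ 2) ^ z ≤ (1 + x ^ 2) ^ z :=
  Real.rpow_le_rpow_of_nonpos (by positivity) (by nlinarith) hz

def Int.natEquivNonneg : ℕ ≃ {m : ℤ // 0 ≤ m} where
  toFun n := ⟨n, n.cast_nonneg⟩
  invFun m := m.1.toNat
  left_inv n := by simp
  right_inv m := Subtype.ext (Int.toNat_of_nonneg m.2)

/-- For `s > 3/2` and `r ≤ 1`, there is `C = C(s,r) > 0` such that for every
integer `k ≥ 0`, `∑_{n ≥ 0} (1+n²)^{1-s} (1+(n+k)²)^{r-1} ≤ C (1+k²)^{r-1}`. -/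
theorem sum_shifted_estimate (s r : ℝ) (hs : 3/2 < s) (hr : r ≤ 1) :
    ∃ C : ℝ, 0 < C ∧ ∀ k : ℤ, 0 ≤ k →
      ∑' n : {m : ℤ // 0 ≤ m}, ENNReal.ofReal
          ((1 + ((n : ℤ) : ℝ) ^ 2) ^ (1 - s) *
            (1 + (((n : ℤ) : ℝ) + (k : ℝ)) ^ 2) ^ (r - 1)) ≤
        ENNReal.ofReal (C * (1 + (k : ℝ) ^ 2) ^ (r - 1)) := by
  set f : ℝ → ℝ := fun x => (1 + x ^ 2) ^ (1 - s)
  have hf : Summable fun n : ℕ => f n := Real.summable_one_add_sq_rpow (by linarith)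
  refine ⟨∑' n : ℕ, f n, hf.tsum_pos (fun n => by positivity) 0 (by positivity),
    fun k hk => ?_⟩
  set w : ℝ := (1 + (k : ℝ) ^ 2) ^ (r - 1)
  have hshift (n : {m : ℤ // 0 ≤ m}) : (1 + (((n : ℤ) : ℝ) + k) ^ 2) ^ (r - 1) ≤ w := by
    have hn : (0 : ℝ) ≤ (n : ℤ) := by exact_mod_cast n.2
    have hk' : (0 : ℝ) ≤ k := by exact_mod_cast hk
    exact Real.one_add_sq_rpow_le_of_nonpos hk' (by linarith) (by linarith)
  calc _ ≤ ∑' n : {m : ℤ // 0 ≤ m}, ENNReal.ofReal (f n) * ENNReal.ofReal w :=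
        ENNReal.tsum_le_tsum fun n => by
          rw [← ENNReal.ofReal_mul (by positivity)]
          exact ENNReal.ofReal_le_ofReal (mul_le_mul_of_nonneg_left (hshift n) (by positivity))
    _ = ENNReal.ofReal (∑' n : ℕ, f n) * ENNReal.ofReal w := by
        rw [ENNReal.tsum_mul_right, ENNReal.ofReal_tsum_of_nonneg (fun n => by positivity) hf,
          ← Int.natEquivNonneg.tsum_eq]
        rfl
    _ = _ := (ENNReal.ofReal_mul (tsum_nonneg fun n => by positivity)).symm
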